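/- Under the assumption rank(bcirc(X_0)) = nr, the identified tensor A with X_1 = A ⋆ X_0 is stable if and only if every Fourier-domain block diagonal matrix of F{bcirc(X_1 ⋆ X_0^†)} is stable, where X_0^† is a right T-inverse of X_0. -/

import Mathlib

open Matrix Complex

/-- A third-order tensor with `s` frontal slices of size `n × m`. -/
abbrev Tensor3 (n m s : ℕ) (R : Type*) := ZMod s → Matrix (Fin n) (Fin m) R

/-- Block circulant matrix of a third-order tensor: the `(i,j)` block is slice `i - j`. -/
def bcirc {n m s : ℕ} {R : Type*} (T : Tensor3 n m s R) :
    Matrix (ZMod s × Fin n) (ZMod s × Fin m) R :=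
  fun ia jb => T (ia.1 - jb.1) ia.2 jb.2

/-- Unfold a tensor by stacking its frontal slices vertically. -/
def unfold {m r s : ℕ} {R : Type*} (S : Tensor3 m r s R) :
    Matrix (ZMod s × Fin m) (Fin r) R :=
  fun ia b => S ia.1 ia.2 b

/-- The T-product: `fold (bcirc T * unfold S)`. -/
def tProd {n m r s : ℕ} [NeZero s] (T : Tensor3 n m s ℝ) (S : Tensor3 m r s ℝ) :
    Tensor3 n r s ℝ :=
  fun k a b => (bcirc T * unfold S) (k, a) b

/-- The T-identity tensor: first frontal slice is the identity, the rest are zero. -/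
def tId {n s : ℕ} : Tensor3 n n s ℝ :=
  fun k => if k = 0 then 1 else 0

/-- The T-transpose: transpose each frontal slice and reverse the order of slices 2..s. -/
def ttrans {n m s : ℕ} {R : Type*} (T : Tensor3 n m s R) : Tensor3 m n s R :=
  fun k => (T (-k))ᵀ

/-- The unitary discrete Fourier transform matrix of size `s`. -/
noncomputable def dft (s : ℕ) : Matrix (ZMod s) (ZMod s) ℂ :=
  fun j k => Complex.exp (-2 * Real.pi * Complex.I * (j.val * k.val) / s) / Real.sqrt s

/-- The `j`-th Fourier-domain block of a tensor: the `j`-th component of the DFT of the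
frontal slices along the third mode. -/
noncomputable def fourierBlock {n m s : ℕ} [NeZero s]
    (T : Tensor3 n m s ℂ) (j : ZMod s) : Matrix (Fin n) (Fin m) ℂ :=
  ∑ k : ZMod s, Complex.exp (-2 * Real.pi * Complex.I * (j.val * k.val) / s) • T k

/-- Block diagonal matrix with blocks `B j`. -/
def blkdiag {n m s : ℕ} [DecidableEq (ZMod s)] (B : ZMod s → Matrix (Fin n) (Fin m) ℂ) :
    Matrix (ZMod s × Fin n) (ZMod s × Fin m) ℂ :=
  fun ia jb => if ia.1 = jb.1 then B ia.1 ia.2 jb.2 else 0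

/-- A real square matrix is stable if all its (complex) eigenvalues have modulus `< 1`. -/
def MStable {N : Type*} [Fintype N] [DecidableEq N] (M : Matrix N N ℝ) : Prop :=
  ∀ μ ∈ (M.map Complex.ofReal).charpoly.roots, ‖μ‖ < 1

/-- A complex square matrix is stable if all its eigenvalues have modulus `< 1`. -/
def CStable {N : Type*} [Fintype N] [DecidableEq N] (M : Matrix N N ℂ) : Prop :=
  ∀ μ ∈ M.charpoly.roots, ‖μ‖ < 1

/-!
Since `bcirc` turns the T-product into matrix multiplication, the T-product is associative,
so `X₁ ⋆ X₀† = A ⋆ (X₀ ⋆ X₀†) = A`. The matrix `F_r ⊗ I` conjugates `bcirc A` into the block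
diagonal matrix of its Fourier blocks, hence the characteristic polynomial of `bcirc A` is the
product of those of the blocks, and its roots are the union of theirs.
-/

open scoped ZMod Kronecker

section TProduct

variable {s : ℕ} [NeZero s]

lemma bcirc_tProd {n m p : ℕ} (T : Tensor3 n m s ℝ) (S : Tensor3 m p s ℝ) :
    bcirc (tProd T S) = bcirc T * bcirc S := by
  ext ⟨k, a⟩ ⟨j, b⟩
  simp only [tProd, bcirc, unfold, Matrix.mul_apply, Fintype.sum_prod_type]
  refine Fintype.sum_equiv (Equiv.addRight j) _ _ fun l => ?_
  simp only [Equiv.coe_addRight, sub_sub, add_comm j, add_sub_cancel_right]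

lemma tProd_assoc {n m p q : ℕ} (T : Tensor3 n m s ℝ) (S : Tensor3 m p s ℝ)
    (U : Tensor3 p q s ℝ) : tProd (tProd T S) U = tProd T (tProd S U) := by
  funext k a b
  change (bcirc (tProd T S) * unfold U) (k, a) b = (bcirc T * (bcirc S * unfold U)) (k, a) b
  rw [bcirc_tProd, Matrix.mul_assoc]

lemma tProd_tId {n m : ℕ} (T : Tensor3 n m s ℝ) : tProd T tId = T := by
  funext k a b
  simp only [tProd, bcirc, unfold, tId, Matrix.mul_apply, Fintype.sum_prod_type]
  rw [Fintype.sum_eq_single 0 fun l hl => by simp [hl]]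
  simp [Matrix.one_apply]

end TProduct

lemma Matrix.charpoly_blockDiagonal {o m R : Type*} [Fintype o] [DecidableEq o] [Fintype m]
    [DecidableEq m] [CommRing R] (B : o → Matrix m m R) :
    (blockDiagonal B).charpoly = ∏ k, (B k).charpoly := by
  have hcharmatrix : (blockDiagonal B).charmatrix = blockDiagonal fun k => (B k).charmatrix := by
    ext ⟨i, k⟩ ⟨j, l⟩
    by_cases hkl : k = l <;> by_cases hij : i = j <;> simp [blockDiagonal_apply, hkl, hij]
  rw [charpoly, hcharmatrix, det_blockDiagonal]
  rfl

lemma Polynomial.mem_roots_prod_iff {ι R : Type*} [Fintype ι] [CommRing R] [IsDomain R]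
    {f : ι → Polynomial R} (hf : ∀ i, f i ≠ 0) (x : R) :
    x ∈ (∏ i, f i).roots ↔ ∃ i, x ∈ (f i).roots := by
  rw [roots_prod _ _ (Finset.prod_ne_zero_iff.mpr fun i _ => hf i)]
  simp

lemma mstable_iff_cstable_map {N : Type*} [Fintype N] [DecidableEq N] (M : Matrix N N ℝ) :
    MStable M ↔ CStable (M.map Complex.ofReal) :=
  Iff.rfl

lemma bcirc_map {n m s : ℕ} {R S : Type*} (T : Tensor3 n m s R) (f : R → S) :
    (bcirc T).map f = bcirc fun k => (T k).map f :=
  rfl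

lemma blkdiag_eq_reindex_blockDiagonal {n m s : ℕ} (B : ZMod s → Matrix (Fin n) (Fin m) ℂ) :
    blkdiag B =
      reindex (Equiv.prodComm _ _) (Equiv.prodComm _ _) (blockDiagonal B) := by
  ext ⟨j, a⟩ ⟨k, b⟩
  simp [blkdiag, blockDiagonal_apply]

lemma charpoly_blkdiag {n s : ℕ} [NeZero s] (B : ZMod s → Matrix (Fin n) (Fin n) ℂ) :
    (blkdiag B).charpoly = ∏ j, (B j).charpoly := by
  rw [blkdiag_eq_reindex_blockDiagonal, charpoly_reindex, Matrix.charpoly_blockDiagonal]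

section Fourier

variable {r : ℕ} [NeZero r]

lemma ZMod.dft_comp_sub_const {E : Type*} [AddCommGroup E] [Module ℂ E] (Φ : ZMod r → E)
    (k j : ZMod r) : 𝓕 (fun l => Φ (l - k)) j = stdAddChar (-(k * j)) • 𝓕 Φ j := by
  simp only [dft_apply, Finset.smul_sum, smul_smul, ← AddChar.map_add_eq_mul]
  refine Fintype.sum_equiv (Equiv.subRight k) _ _ fun l => ?_
  simp only [Equiv.subRight_apply]
  ring_nf

lemma fourierBlock_eq_dft {n m : ℕ} (T : Tensor3 n m r ℂ) : fourierBlock T = 𝓕 T := by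
  funext j
  refine Finset.sum_congr rfl fun k _ => congrArg (· • T k) ?_
  have hcast : ((-(k.val * j.val) : ℤ) : ZMod r) = -(k * j) := by
    push_cast
    simp only [ZMod.natCast_zmod_val]
  rw [← hcast, ZMod.stdAddChar_coe]
  congr 1
  push_cast
  ring

/-- `√r • dft r`: unnormalized, so that no square roots appear. -/
noncomputable def dftMatrix (r : ℕ) [NeZero r] : Matrix (ZMod r) (ZMod r) ℂ :=
  of fun j k => ZMod.stdAddChar (-(j * k))

lemma dftMatrix_mul_conjTranspose : dftMatrix r * (dftMatrix r)ᴴ = (r : ℂ) • 1 := by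
  ext j k
  simp only [dftMatrix, mul_apply, conjTranspose_apply, of_apply, Complex.star_def,
    ← AddChar.map_neg_eq_conj, neg_neg, ← AddChar.map_add_eq_mul]
  have hexponent (l : ZMod r) : -(j * l) + k * l = l * (k - j) := by ring
  simp only [hexponent, AddChar.sum_mulShift _ (ZMod.isPrimitive_stdAddChar r), ZMod.card,
    sub_eq_zero, Matrix.smul_apply, one_apply, eq_comm (a := k)]
  split_ifs <;> simp

noncomputable def blockDftMatrix (r n : ℕ) [NeZero r] :
    Matrix (ZMod r × Fin n) (ZMod r × Fin n) ℂ :=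
  dftMatrix r ⊗ₖ 1

lemma isUnit_blockDftMatrix (n : ℕ) : IsUnit (blockDftMatrix r n) := by
  have hr : (r : ℂ) ≠ 0 := NeZero.ne _
  have hinv : dftMatrix r * ((r : ℂ)⁻¹ • (dftMatrix r)ᴴ) = 1 := by
    rw [Matrix.mul_smul, dftMatrix_mul_conjTranspose, smul_smul, inv_mul_cancel₀ hr, one_smul]
  rw [blockDftMatrix, isUnit_iff_isUnit_det, det_kronecker, det_one, one_pow, mul_one]
  exact (isUnit_det_of_right_inverse hinv).pow _

lemma blockDftMatrix_mul_bcirc {n m : ℕ} (T : Tensor3 n m r ℂ) :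
    blockDftMatrix r n * bcirc T = blkdiag (fourierBlock T) * blockDftMatrix r m := by
  ext ⟨j, a⟩ ⟨k, b⟩
  have hshift := congrFun (congrFun (ZMod.dft_comp_sub_const T k j) a) b
  simp only [ZMod.dft_apply, Matrix.sum_apply, Matrix.smul_apply, smul_eq_mul] at hshift
  simp only [blockDftMatrix, dftMatrix, mul_apply, kroneckerMap_apply, of_apply, one_apply,
    mul_ite, mul_one, mul_zero, bcirc, ite_mul, zero_mul, Fintype.sum_prod_type,
    Finset.sum_ite_eq, Finset.sum_ite_eq', Finset.mem_univ, if_true, fourierBlock_eq_dft,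
    blkdiag, ZMod.dft_apply, Matrix.sum_apply, Matrix.smul_apply, smul_eq_mul]
  simp only [mul_comm j]
  rw [hshift, mul_comm]

lemma charpoly_bcirc {n : ℕ} (T : Tensor3 n n r ℂ) :
    (bcirc T).charpoly = ∏ j, (fourierBlock T j).charpoly := by
  obtain ⟨F, hF⟩ := isUnit_blockDftMatrix (r := r) n
  have hconj : bcirc T = F⁻¹.val * (blkdiag (fourierBlock T) * F.val) := by
    rw [hF, ← blockDftMatrix_mul_bcirc, ← hF, ← Matrix.mul_assoc, Units.inv_mul, Matrix.one_mul]
  rw [hconj, charpoly_mul_comm, Matrix.mul_assoc, Units.mul_inv, Matrix.mul_one,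
    charpoly_blkdiag]

lemma cstable_bcirc_iff {n : ℕ} (T : Tensor3 n n r ℂ) :
    CStable (bcirc T) ↔ ∀ j, CStable (fourierBlock T j) := by
  simp only [CStable, charpoly_bcirc,
    Polynomial.mem_roots_prod_iff fun j => (charpoly_monic _).ne_zero]
  exact ⟨fun h j μ hμ => h μ ⟨j, hμ⟩, fun h μ ⟨j, hμ⟩ => h j μ hμ⟩

end Fourier

theorem informativity_stability_fourier_general {n M r : ℕ} [NeZero r]
    (X0 X1 : Tensor3 n M r ℝ) (X0d : Tensor3 M n r ℝ) (A : Tensor3 n n r ℝ)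
    (hinv : tProd X0 X0d = tId)
    (hA : X1 = tProd A X0) :
    MStable (bcirc A) ↔
      ∀ j : ZMod r,
        CStable (fourierBlock (fun k => ((tProd X1 X0d) k).map Complex.ofReal) j) := by
  have hidentified : tProd X1 X0d = A := by rw [hA, tProd_assoc, hinv, tProd_tId]
  rw [hidentified, mstable_iff_cstable_map, bcirc_map, cstable_bcirc_iff]

/-- under `rank (bcirc X₀) = n * r`, the identified tensor `A` is stable iff
every Fourier-domain block of `bcirc (X₁ ⋆ X₀†)` is stable. -/
theorem informativity_stability_fourier {n M r : ℕ} [NeZero r]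
    (X0 X1 : Tensor3 n M r ℝ) (X0d : Tensor3 M n r ℝ) (A : Tensor3 n n r ℝ)
    (hrank : (bcirc X0).rank = n * r)
    (hinv : tProd X0 X0d = tId)
    (hA : X1 = tProd A X0) :
    MStable (bcirc A) ↔
      ∀ j : ZMod r,
        CStable (fourierBlock (fun k => ((tProd X1 X0d) k).map Complex.ofReal) j) :=
  informativity_stability_fourier_general X0 X1 X0d A hinv hA
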